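/- arXiv:2102.07581 — 5 statements merged into one kernel-verified Lean document; each statement's English description precedes it below -/
import Mathlib

section
/- Let $\phi$ be the golden ratio, and suppose $c_1,\dots,c_n \in \{-2,-1,0,1,2\}$ satisfy $\sum_{i=1}^n c_i \phi^{n-i} = 0$. Then for every $m \leq n$ we have $\sum_{i=1}^m c_i \phi^{m-i} \in (-2\phi, 2\phi)$. -/
/-!
The partial sums `S m = ∑_{i ≤ m} c i φ^(m-i)` obey the Horner recursion `S (m+1) = φ S m + c (m+1)`.
Because `φ · 2φ - 2 = 2φ` (from `φ² = φ + 1`), the region `|x| ≥ 2φ` is invariant under every map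
`x ↦ φ x + d` with `|d| ≤ 2`: the expansion by `φ` outweighs the digit. So once a partial sum
leaves `(-2φ, 2φ)` all later ones stay outside, and the last one, `0`, could not be reached.
-/

noncomputable def phi : ℝ := (1 + Real.sqrt 5) / 2

open Finset

def hornerSum {R : Type*} [CommSemiring R] (f : ℕ → R) (x : R) (m : ℕ) : R :=
  ∑ i ∈ Icc 1 m, f i * x ^ (m - i)

theorem hornerSum_succ {R : Type*} [CommSemiring R] (f : ℕ → R) (x : R) (m : ℕ) :
    hornerSum f x (m + 1) = x * hornerSum f x m + f (m + 1) := by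
  rw [hornerSum, sum_Icc_succ_top (by omega), Nat.sub_self, pow_zero, mul_one, hornerSum, mul_sum]
  congr 1
  refine sum_congr rfl fun i hi => ?_
  rw [Nat.sub_add_comm (mem_Icc.mp hi).2, pow_succ]
  ring

theorem le_abs_mul_add {a R D x d : ℝ} (ha : 0 ≤ a) (hRD : R + D ≤ a * R)
    (hx : R ≤ |x|) (hd : |d| ≤ D) : R ≤ |a * x + d| :=
  calc R ≤ a * |x| - |d| := by nlinarith
    _ = |a * x| - |d| := by rw [abs_mul, abs_of_nonneg ha]
    _ ≤ |a * x + d| := abs_sub_abs_le_abs_add _ _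

theorem le_abs_of_le_abs_of_recursion {a R D : ℝ} {S d : ℕ → ℝ} (ha : 0 ≤ a)
    (hRD : R + D ≤ a * R) (hS : ∀ m, S (m + 1) = a * S m + d m) (hd : ∀ m, |d m| ≤ D)
    {m : ℕ} (hm : R ≤ |S m|) {n : ℕ} (hmn : m ≤ n) : R ≤ |S n| := by
  induction n, hmn using Nat.le_induction with
  | base => exact hm
  | succ k _ ih => exact hS k ▸ le_abs_mul_add ha hRD ih (hd k)

theorem phi_eq_goldenRatio : phi = Real.goldenRatio := rfl

theorem two_mul_phi_add_two : 2 * phi + 2 = phi * (2 * phi) := by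
  rw [phi_eq_goldenRatio]
  linear_combination -2 * Real.goldenRatio_sq

/-- If a `{-2,...,2}`-polynomial in `φ` vanishes then all its partial sums lie
in `(-2φ, 2φ)`. -/
theorem stmt_4 (n : ℕ) (c : ℕ → ℤ) (hc : ∀ i, c i ∈ Set.Icc (-2 : ℤ) 2)
    (hzero : ∑ i ∈ Finset.Icc 1 n, (c i : ℝ) * phi ^ (n - i) = 0) :
    ∀ m ≤ n, ∑ i ∈ Finset.Icc 1 m, (c i : ℝ) * phi ^ (m - i) ∈
      Set.Ioo (-(2 * phi)) (2 * phi) := by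
  intro m hmn
  have hdigit : ∀ i, |(c (i + 1) : ℝ)| ≤ 2 := fun i => by
    rw [abs_le]
    exact_mod_cast hc (i + 1)
  have hphi : 0 < phi := phi_eq_goldenRatio ▸ Real.goldenRatio_pos
  rw [Set.mem_Ioo, ← abs_lt]
  by_contra! hm
  have hn := le_abs_of_le_abs_of_recursion hphi.le two_mul_phi_add_two.le
    (hornerSum_succ (fun i => (c i : ℝ)) phi) hdigit hm hmn
  rw [hornerSum, hzero, abs_zero] at hn
  linarith
end

section
/- For every point $x \in X(\phi)$, the corresponding contracting coordinate $x_c = S_{c_n}\circ\cdots\circ S_{c_1}(0)$ lies in the open interval $(-\phi^2, \phi^2)$, and $x_c$ does not depend on the choice of coding $c_1\cdots c_n \in \{-1,0,1\}^n$ with $x = \sum_{i=1}^n c_i \phi^{n-i}$. -/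
open Real goldenRatio

namespace GoldenCoords

variable {R : Type*} [CommRing R]

def toRing (r : R) (p : ℤ × ℤ) : R := p.1 + p.2 * r

def mulAdd (p : ℤ × ℤ) (c : ℤ) : ℤ × ℤ := (p.2 + c, p.1 + p.2)

lemma toRing_mulAdd {r : R} (hr : r ^ 2 = r + 1) (p : ℤ × ℤ) (c : ℤ) :
    toRing r (mulAdd p c) = r * toRing r p + c := by
  simp only [toRing, mulAdd, Int.cast_add]
  linear_combination (-(p.2 : R)) * hr

lemma foldl_mul_add {r : R} (hr : r ^ 2 = r + 1) (l : List ℤ) :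
    l.foldl (fun y (c : ℤ) => r * y + c) 0 = toRing r (l.foldl mulAdd 0) := by
  convert List.foldl_hom (toRing r) (g₂ := fun y (c : ℤ) => r * y + c) (init := 0)
    fun p c => (toRing_mulAdd hr p c).symm
  simp [toRing]

lemma toRing_goldenRatio_injective : Function.Injective (toRing φ) := by
  rintro ⟨a, b⟩ ⟨a', b'⟩ h
  simp only [toRing] at h
  obtain rfl : b = b' := by
    by_contra hb
    have hb' : (b' - b : ℝ) ≠ 0 := sub_ne_zero.2 (by exact_mod_cast Ne.symm hb)
    refine goldenRatio_irrational ⟨(a - a') / (b' - b), ?_⟩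
    push_cast
    rw [div_eq_iff hb']
    linarith
  simp_all

end GoldenCoords

lemma neg_div_goldenRatio (y : ℝ) : -y / φ = ψ * y := by
  rw [div_eq_mul_inv, inv_goldenRatio]
  ring

lemma abs_neg_div_goldenRatio_add_lt {y c : ℝ} (hy : |y| < φ ^ 2) (hc : |c| ≤ 1) :
    |-y / φ + c| < φ ^ 2 :=
  calc |-y / φ + c| ≤ |y| / φ + |c| := by
        simpa [abs_div, abs_of_pos goldenRatio_pos] using abs_add_le (-y / φ) c
    _ < φ ^ 2 / φ + 1 := add_lt_add_of_lt_of_le (by gcongr) hc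
    _ = φ ^ 2 := by
        rw [pow_two, mul_div_cancel_right₀ _ goldenRatio_ne_zero, ← pow_two, goldenRatio_sq]

/-- The contracting coordinate `x_c = S_{c_n} ∘ ⋯ ∘ S_{c_1}(0)` of a point
`x = T_{c_n} ∘ ⋯ ∘ T_{c_1}(0) ∈ X(φ)` lies in `(-φ², φ²)` and does not depend
on the choice of `{-1,0,1}` coding of `x`. -/
theorem stmt_10 :
    (∀ l : List ℤ, (∀ i ∈ l, i ∈ ({-1, 0, 1} : Set ℤ)) →
      l.foldl (fun y i => -y / phi + i) 0 ∈ Set.Ioo (-(phi ^ 2)) (phi ^ 2)) ∧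
    (∀ l₁ l₂ : List ℤ, (∀ i ∈ l₁, i ∈ ({-1, 0, 1} : Set ℤ)) →
      (∀ i ∈ l₂, i ∈ ({-1, 0, 1} : Set ℤ)) →
      l₁.foldl (fun y i => phi * y + i) 0 = l₂.foldl (fun y i => phi * y + i) 0 →
      l₁.foldl (fun y i => -y / phi + i) 0 = l₂.foldl (fun y i => -y / phi + i) 0) := by
  have hphi : phi = φ := rfl
  simp only [hphi, List.pure_def, List.bind_eq_flatMap, ← List.map_eq_flatMap, List.foldl_map]
  refine ⟨fun l hl => ?_, fun l₁ l₂ _ _ heq => ?_⟩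
  · rw [Set.mem_Ioo, ← abs_lt]
    refine List.foldlRecOn (motive := fun y => |y| < φ ^ 2) l _
      (by simpa using pow_pos goldenRatio_pos 2) fun y hy c hc => ?_
    refine abs_neg_div_goldenRatio_add_lt hy ?_
    rcases hl c hc with rfl | rfl | rfl <;> norm_num
  · simp only [neg_div_goldenRatio, GoldenCoords.foldl_mul_add goldenConj_sq,
      GoldenCoords.foldl_mul_add goldenRatio_sq] at heq ⊢
    rw [GoldenCoords.toRing_goldenRatio_injective heq]
end

section
/- Let $A$ be a nonnegative $N\times N$ real matrix with spectral radius $\rho(A) > 0$, and let $e_1 = (1,0,\dots,0)$. Assume: (i) $A_{1,1} > 0$; (ii) there exists $n$ such that all entries of the row vector $e_1 A^n$ are strictly positive; (iii) $(e_1A^n)_i \leq (e_1A^n)_1$ for all $n \in \mathbb{N}$ and all $i \in \{1,\dots,N\}$. Then the limit $\lim_{n\to\infty} e_1 A^n / \rho(A)^n$ exists. -/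
/-!
Normalising by `ρ(A)`, Gelfand's formula gives `(Aⁿ)₀₀ ≤ ρ(A)ⁿ`. Splitting paths from `0` at their
first return to `0` shows that `bₙ = (Aⁿ)₀₀ / ρ(A)ⁿ` is a bounded renewal sequence whose
first-return weights `f` have `f₀ = A₀₀ / ρ(A) > 0`, so the discrete renewal theorem applies.
Its proof: the generating function identity `B = 1 + x F B` with `B(x) ≤ (1 - x)⁻¹` gives
`∑ f ≤ 1`; because `f₀ > 0`, values of `b` close to `λ = limsup b` propagate backwards, giving
arbitrarily long stretches on which `b ≈ λ`; and the identity `∑_{j ≤ n} qⱼ b_{n-j} = 1` for the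
tails `qⱼ = 1 - ∑_{k<j} fₖ` then yields `λ ∑ q ≤ 1` and `liminf b ≥ 1 - (∑ q - 1) λ ≥ λ`.
Splitting paths at their last visit to `0` instead writes `(Aⁿ)₀ᵢ / ρ(A)ⁿ` as the convolution of
`b` with a nonnegative sequence; by (iii) this convolution is dominated by `bₙ`, which makes the
sequence summable when `lim b > 0`, and the convolution converges by dominated convergence.
-/

/-- The spectral radius of a real square matrix: the supremum of the moduli of
its complex eigenvalues. -/
noncomputable def specRad {N : ℕ} (A : Matrix (Fin N) (Fin N) ℝ) : ℝ :=
  sSup ((fun z : ℂ => ‖z‖) '' spectrum ℂ (A.map (Complex.ofReal : ℝ → ℂ)))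

open Filter Finset Topology

theorem eventually_sum_range_mul_le {f b : ℕ → ℝ} (hf : ∀ k, 0 ≤ f k) (hfs : Summable f)
    (hb : ∀ n, b n ≤ 1) {c : ℝ} (hc : 0 ≤ c) (hbc : ∀ᶠ n in atTop, b n ≤ c) {ε : ℝ}
    (hε : 0 < ε) :
    ∀ᶠ n in atTop, ∑ k ∈ range (n + 1), f k * b (n - k) ≤ (∑' k, f k) * c + ε := by
  obtain ⟨K, hK⟩ := ((tendsto_sum_nat_add f).eventually (eventually_le_nhds hε)).exists
  obtain ⟨N, hN⟩ := eventually_atTop.1 hbc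
  filter_upwards [eventually_ge_atTop (N + K)] with n hn
  rw [← sum_range_add_sum_Ico _ (show K ≤ n + 1 by omega)]
  have hhead : ∑ k ∈ range K, f k * b (n - k) ≤ (∑' k, f k) * c :=
    calc _ ≤ ∑ k ∈ range K, f k * c := sum_le_sum fun k hk =>
          mul_le_mul_of_nonneg_left (hN _ (by rw [mem_range] at hk; omega)) (hf k)
      _ = (∑ k ∈ range K, f k) * c := (sum_mul ..).symm
      _ ≤ _ := mul_le_mul_of_nonneg_right (hfs.sum_le_tsum _ fun k _ => hf k) hc
  have htail : ∑ k ∈ Ico K (n + 1), f k * b (n - k) ≤ ε :=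
    calc _ ≤ ∑ k ∈ Ico K (n + 1), f k := sum_le_sum fun k _ => mul_le_of_le_one_right (hf k) (hb _)
      _ = ∑ k ∈ range (n + 1 - K), f (k + K) := by rw [sum_Ico_eq_sum_range]; simp [add_comm]
      _ ≤ ∑' k, f (k + K) := ((summable_nat_add_iff K).2 hfs).sum_le_tsum _ fun k _ => hf _
      _ ≤ ε := hK
  linarith

theorem eventually_sum_range_mul_le_add {f b : ℕ → ℝ} (hf : ∀ k, 0 ≤ f k) (hfs : Summable f)
    (hb : ∀ n, b n ≤ 1) {c : ℝ} (hc : 0 ≤ c) (hbc : ∀ᶠ n in atTop, b n ≤ c) {ε : ℝ}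
    (hε : 0 < ε) :
    ∀ᶠ n in atTop,
      ∑ k ∈ range (n + 1), f k * b (n - k) ≤ f 0 * b n + (∑' k, f k - f 0) * c + ε := by
  set f' := Function.update f 0 0
  have hf' (k : ℕ) : 0 ≤ f' k := by
    rcases eq_or_ne k 0 with rfl | hk
    · simp [f']
    · simpa [f', hk] using hf k
  have htsum : ∑' k, f' k = ∑' k, f k - f 0 := by
    rw [hfs.tsum_eq_zero_add, (hfs.update 0 0).tsum_eq_zero_add]
    simp
  filter_upwards [eventually_sum_range_mul_le hf' (hfs.update 0 0) hb hc hbc hε] with n hn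
  rw [sum_range_succ'] at hn ⊢
  simp only [htsum, f', Function.update_self, Function.update_of_ne (Nat.succ_ne_zero _)] at hn
  simp only [Nat.sub_zero]
  linarith

theorem exists_tendsto_sum_range_mul_of_le {b g : ℕ → ℝ} {β : ℝ} (hb : Tendsto b atTop (𝓝 β))
    (hb0 : ∀ n, 0 ≤ b n) (hb1 : ∀ n, b n ≤ 1) (hg : ∀ m, 0 ≤ g m)
    (hle : ∀ n, ∑ m ∈ range (n + 1), b (n - m) * g m ≤ b n) :
    ∃ L, Tendsto (fun n => ∑ m ∈ range (n + 1), b (n - m) * g m) atTop (𝓝 L) := by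
  rcases (ge_of_tendsto' hb hb0).eq_or_lt with rfl | hβ
  · exact ⟨0, tendsto_of_tendsto_of_tendsto_of_le_of_le tendsto_const_nhds hb
      (fun n => sum_nonneg fun m _ => mul_nonneg (hb0 _) (hg m)) hle⟩
  have hgs : Summable g := by
    refine summable_of_sum_range_le hg (c := β⁻¹) fun M => ?_
    have hlim : Tendsto (fun n => ∑ m ∈ range M, b (n - m) * g m) atTop
        (𝓝 (∑ m ∈ range M, β * g m)) :=
      tendsto_finsetSum _ fun m _ => (hb.comp (tendsto_sub_atTop_nat m)).mul_const (g m)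
    have hle1 : ∀ᶠ n in atTop, ∑ m ∈ range M, b (n - m) * g m ≤ 1 := by
      filter_upwards [eventually_ge_atTop M] with n hn
      refine (sum_le_sum_of_subset_of_nonneg (range_subset_range.2 (by omega))
        fun m _ _ => mul_nonneg (hb0 _) (hg m)).trans ((hle n).trans (hb1 n))
    have := le_of_tendsto hlim hle1
    rw [← mul_sum] at this
    rwa [← one_div, le_div_iff₀' hβ]
  set F : ℕ → ℕ → ℝ := fun n m => if m ≤ n then b (n - m) * g m else 0
  have hF (n : ℕ) : ∑ m ∈ range (n + 1), b (n - m) * g m = ∑' m, F n m := by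
    rw [tsum_eq_sum (s := range (n + 1)) fun m hm => if_neg (by simpa [Nat.lt_succ_iff] using hm)]
    exact sum_congr rfl fun m hm => (if_pos (Nat.lt_succ_iff.1 (mem_range.1 hm))).symm
  refine ⟨∑' m, β * g m, ?_⟩
  simp_rw [hF]
  refine tendsto_tsum_of_dominated_convergence hgs (fun m => ?_)
    (Eventually.of_forall fun n m => ?_)
  · refine ((hb.comp (tendsto_sub_atTop_nat m)).mul_const (g m)).congr' ?_
    filter_upwards [eventually_ge_atTop m] with n hn
    simp [F, hn]
  · simp only [F]
    split_ifs
    · rw [Real.norm_eq_abs, abs_of_nonneg (mul_nonneg (hb0 _) (hg m))]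
      exact mul_le_of_le_one_left (hg m) (hb1 _)
    · simp [hg m]

-- `f k` is the weight of a first return at time `k + 1`.
structure IsBoundedRenewal (f b : ℕ → ℝ) : Prop where
  f_nonneg : ∀ k, 0 ≤ f k
  b_zero : b 0 = 1
  b_nonneg : ∀ n, 0 ≤ b n
  b_le_one : ∀ n, b n ≤ 1
  b_succ : ∀ n, b (n + 1) = ∑ k ∈ range (n + 1), f k * b (n - k)

namespace IsBoundedRenewal

variable {f b : ℕ → ℝ}

theorem sum_range_mul_pow_lt_one (h : IsBoundedRenewal f b) {x : ℝ} (hx0 : 0 ≤ x) (hx1 : x < 1)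
    (J : ℕ) : ∑ k ∈ range J, f k * x ^ (k + 1) < 1 := by
  set c : ℕ → ℝ := fun n => x ^ n * b n
  set g : ℕ → ℝ := fun k => if k < J then f k * x ^ (k + 1) else 0
  have hc_nonneg (n : ℕ) : 0 ≤ c n := mul_nonneg (pow_nonneg hx0 n) (h.b_nonneg n)
  have hg_nonneg (k : ℕ) : 0 ≤ g k := by
    simp only [g]; split_ifs
    exacts [mul_nonneg (h.f_nonneg k) (pow_nonneg hx0 _), le_rfl]
  have hg_le (k : ℕ) : g k ≤ f k * x ^ (k + 1) := by
    simp only [g]; split_ifs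
    exacts [le_rfl, mul_nonneg (h.f_nonneg k) (pow_nonneg hx0 _)]
  have hc : Summable c := (summable_geometric_of_lt_one hx0 hx1).of_nonneg_of_le hc_nonneg
    fun n => mul_le_of_le_one_right (pow_nonneg hx0 n) (h.b_le_one n)
  have hg : Summable g := summable_of_ne_finset_zero (s := range J) fun k hk => by
    simp_all [g]
  have hG : ∑' k, g k = ∑ k ∈ range J, f k * x ^ (k + 1) := by
    rw [tsum_eq_sum (s := range J) fun k hk => by simp_all [g]]
    exact sum_congr rfl fun k hk => if_pos (mem_range.1 hk)
  have hC : 1 ≤ ∑' n, c n := by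
    simpa [c, h.b_zero] using hc.le_tsum 0 fun n _ => hc_nonneg n
  have hconv := hasSum_sum_range_mul_of_summable_norm (f := g) (g := c)
    (by simpa [abs_of_nonneg, hg_nonneg]) (by simpa [abs_of_nonneg, hc_nonneg])
  have hshift : HasSum (fun n => c (n + 1)) (∑' n, c n - 1) := by
    simpa [c, h.b_zero] using (hasSum_nat_add_iff' 1).2 hc.hasSum
  -- By the renewal equation the Cauchy product `G(x) C(x)` is at most `C(x) - 1`.
  have hprod : (∑' k, g k) * ∑' n, c n ≤ ∑' n, c n - 1 := by
    refine hasSum_le (fun n => ?_) hconv hshift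
    calc ∑ k ∈ range (n + 1), g k * c (n - k)
        ≤ ∑ k ∈ range (n + 1), f k * x ^ (k + 1) * c (n - k) :=
          sum_le_sum fun k _ => mul_le_mul_of_nonneg_right (hg_le k) (hc_nonneg _)
      _ = c (n + 1) := by
          rw [show c (n + 1) = x ^ (n + 1) * b (n + 1) from rfl, h.b_succ, mul_sum]
          refine sum_congr rfl fun k hk => ?_
          obtain ⟨m, rfl⟩ := Nat.exists_eq_add_of_le (Nat.lt_succ_iff.1 (mem_range.1 hk))
          simp only [c, Nat.add_sub_cancel_left]
          ring
  rw [← hG]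
  nlinarith

theorem sum_range_le_one (h : IsBoundedRenewal f b) (J : ℕ) : ∑ k ∈ range J, f k ≤ 1 := by
  have hcont : Continuous fun x : ℝ => ∑ k ∈ range J, f k * x ^ (k + 1) := by fun_prop
  refine le_of_tendsto
    ((hcont.tendsto' 1 _ (by simp)).mono_left (nhdsWithin_le_nhds (s := Set.Iio 1))) ?_
  filter_upwards [Ioo_mem_nhdsLT (zero_lt_one' ℝ)] with x hx
  exact (h.sum_range_mul_pow_lt_one hx.1.le hx.2 J).le

theorem summable (h : IsBoundedRenewal f b) : Summable f :=
  summable_of_sum_range_le h.f_nonneg h.sum_range_le_one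

theorem tsum_le_one (h : IsBoundedRenewal f b) : ∑' k, f k ≤ 1 :=
  Real.tsum_le_of_sum_range_le h.f_nonneg h.sum_range_le_one

theorem sum_range_tail_mul_eq_one (h : IsBoundedRenewal f b) (n : ℕ) :
    ∑ j ∈ range (n + 1), (1 - ∑ k ∈ range j, f k) * b (n - j) = 1 := by
  induction n with
  | zero => simp [h.b_zero]
  | succ n ih =>
    have hshift : ∑ j ∈ range (n + 1), (1 - ∑ k ∈ range (j + 1), f k) * b (n + 1 - (j + 1))
        = ∑ j ∈ range (n + 1), (1 - ∑ k ∈ range j, f k) * b (n - j)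
          - ∑ j ∈ range (n + 1), f j * b (n - j) := by
      rw [← sum_sub_distrib]
      exact sum_congr rfl fun j _ => by rw [sum_range_succ, Nat.add_sub_add_right]; ring
    rw [sum_range_succ', hshift, ih, ← h.b_succ]
    simp

theorem exists_pos_limsup_sub_le_of_succ (h : IsBoundedRenewal f b) (hf0 : 0 < f 0) {ε : ℝ}
    (hε : 0 < ε) :
    ∃ δ > 0, ∀ᶠ m in atTop, limsup b atTop - δ ≤ b (m + 1) → limsup b atTop - ε ≤ b m := by
  set l := limsup b atTop
  have hbdd : IsBoundedUnder (· ≤ ·) atTop b := isBoundedUnder_of ⟨1, h.b_le_one⟩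
  have hl : 0 ≤ l := le_limsup_of_frequently_le (Frequently.of_forall h.b_nonneg) hbdd
  set δ := f 0 * ε / 4
  have hδ : 0 < δ := by positivity
  refine ⟨δ, hδ, ?_⟩
  have hup : ∀ᶠ n in atTop, b n ≤ l + δ :=
    (eventually_lt_of_limsup_lt (by linarith) hbdd).mono fun _ => le_of_lt
  filter_upwards [eventually_sum_range_mul_le_add h.f_nonneg h.summable h.b_le_one
    (by linarith) hup hδ] with m hm hlow
  rw [← h.b_succ] at hm
  have htail : (∑' k, f k - f 0) * (l + δ) ≤ (1 - f 0) * (l + δ) :=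
    mul_le_mul_of_nonneg_right (by linarith [h.tsum_le_one]) (by linarith)
  have hδε : f 0 * ε = 4 * δ := by simp only [δ]; ring
  refine le_of_mul_le_mul_left ?_ hf0
  nlinarith [mul_pos hf0 hδ]

theorem exists_forall_limsup_sub_le_add (h : IsBoundedRenewal f b) (hf0 : 0 < f 0) (J : ℕ) :
    ∀ {ε : ℝ}, 0 < ε → ∀ N, ∃ n ≥ N, ∀ j ≤ J, limsup b atTop - ε ≤ b (n + j) := by
  induction J with
  | zero =>
    intro ε hε N
    have hcob : IsCoboundedUnder (· ≤ ·) atTop b :=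
      (isBoundedUnder_of ⟨0, h.b_nonneg⟩ : IsBoundedUnder (· ≥ ·) atTop b).isCoboundedUnder_le
    obtain ⟨n, hn, hbn⟩ := frequently_atTop.1 (frequently_lt_of_lt_limsup hcob (sub_lt_self _ hε)) N
    refine ⟨n, hn, fun j hj => ?_⟩
    obtain rfl : j = 0 := by omega
    exact hbn.le
  | succ J ih =>
    intro ε hε N
    obtain ⟨δ, hδ, hstep⟩ := h.exists_pos_limsup_sub_le_of_succ hf0 hε
    obtain ⟨N₁, hN₁⟩ := eventually_atTop.1 hstep
    obtain ⟨n, hn, hwin⟩ := ih (lt_min hδ hε) (max N N₁ + 1)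
    refine ⟨n - 1, by omega, fun j hj => ?_⟩
    rcases j with _ | j
    · refine hN₁ (n - 1) (by omega) ?_
      rw [Nat.sub_add_cancel (by omega)]
      linarith [add_zero n ▸ hwin 0 (Nat.zero_le _), min_le_left δ ε]
    · rw [show n - 1 + (j + 1) = n + j by omega]
      linarith [hwin j (by omega), min_le_right δ ε]

theorem limsup_mul_sum_range_tail_le_one (h : IsBoundedRenewal f b) (hf0 : 0 < f 0) (J : ℕ) :
    limsup b atTop * ∑ j ∈ range J, (1 - ∑ k ∈ range j, f k) ≤ 1 := by
  set l := limsup b atTop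
  set M := ∑ j ∈ range J, (1 - ∑ k ∈ range j, f k)
  have hq (j : ℕ) : 0 ≤ 1 - ∑ k ∈ range j, f k := sub_nonneg.2 (h.sum_range_le_one j)
  have key (ε : ℝ) (hε : 0 < ε) : (l - ε) * M ≤ 1 := by
    obtain ⟨n, -, hwin⟩ := h.exists_forall_limsup_sub_le_add hf0 J hε 0
    calc (l - ε) * M = ∑ j ∈ range J, (1 - ∑ k ∈ range j, f k) * (l - ε) := by
          rw [mul_comm, sum_mul]
      _ ≤ ∑ j ∈ range J, (1 - ∑ k ∈ range j, f k) * b (n + J - j) := by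
          refine sum_le_sum fun j hj => mul_le_mul_of_nonneg_left ?_ (hq j)
          rw [mem_range] at hj
          simpa [show n + (J - j) = n + J - j by omega] using hwin (J - j) (by omega)
      _ ≤ ∑ j ∈ range (n + J + 1), (1 - ∑ k ∈ range j, f k) * b (n + J - j) :=
          sum_le_sum_of_subset_of_nonneg (range_subset_range.2 (by omega))
            fun j _ _ => mul_nonneg (hq j) (h.b_nonneg _)
      _ = 1 := h.sum_range_tail_mul_eq_one _
  have hcont : Tendsto (fun ε => (l - ε) * M) (𝓝[>] 0) (𝓝 (l * M)) := by
    have : Continuous fun ε : ℝ => (l - ε) * M := by fun_prop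
    exact (this.tendsto' 0 _ (by simp)).mono_left nhdsWithin_le_nhds
  exact le_of_tendsto hcont (eventually_nhdsWithin_of_forall key)

theorem exists_tendsto (h : IsBoundedRenewal f b) (hf0 : 0 < f 0) :
    ∃ β, Tendsto b atTop (𝓝 β) := by
  set l := limsup b atTop
  set q : ℕ → ℝ := fun j => 1 - ∑ k ∈ range j, f k
  have hbdd : IsBoundedUnder (· ≤ ·) atTop b := isBoundedUnder_of ⟨1, h.b_le_one⟩
  have hbdd' : IsBoundedUnder (· ≥ ·) atTop b := isBoundedUnder_of ⟨0, h.b_nonneg⟩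
  have hl : 0 ≤ l := le_limsup_of_frequently_le (Frequently.of_forall h.b_nonneg) hbdd
  have hq (j : ℕ) : 0 ≤ q j := sub_nonneg.2 (h.sum_range_le_one j)
  have hlM := h.limsup_mul_sum_range_tail_le_one hf0
  refine ⟨l, tendsto_of_le_liminf_of_limsup_le ?_ le_rfl hbdd hbdd'⟩
  by_cases hqs : Summable q
  · set μ := ∑' j, q j
    have hlμ : l * μ ≤ 1 := le_of_tendsto' (hqs.hasSum.tendsto_sum_nat.const_mul l) hlM
    have key (ε : ℝ) (hε : 0 < ε) : 1 - (μ - 1) * (l + ε) - ε ≤ liminf b atTop := by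
      have hup : ∀ᶠ n in atTop, b n ≤ l + ε :=
        (eventually_lt_of_limsup_lt (by linarith) hbdd).mono fun _ => le_of_lt
      refine le_liminf_of_le hbdd.isCoboundedUnder_ge ?_
      filter_upwards [eventually_sum_range_mul_le_add hq hqs h.b_le_one (by linarith) hup hε]
        with n hn
      rw [h.sum_range_tail_mul_eq_one] at hn
      simp only [q, range_zero, sum_empty, sub_zero, one_mul] at hn
      linarith
    have hcont : Tendsto (fun ε => 1 - (μ - 1) * (l + ε) - ε) (𝓝[>] 0) (𝓝 (1 - (μ - 1) * l)) := by
      have : Continuous fun ε : ℝ => 1 - (μ - 1) * (l + ε) - ε := by fun_prop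
      exact (this.tendsto' 0 _ (by simp)).mono_left nhdsWithin_le_nhds
    have := le_of_tendsto hcont (eventually_nhdsWithin_of_forall fun ε hε => key ε hε)
    nlinarith
  · have hl0 : l = 0 := by
      by_contra hne
      have hlpos : 0 < l := hl.lt_of_ne (Ne.symm hne)
      have htop := (not_summable_iff_tendsto_nat_atTop_of_nonneg hq).1 hqs
      obtain ⟨J, hJ⟩ := (htop.eventually_gt_atTop l⁻¹).exists
      have := mul_lt_mul_of_pos_left hJ hlpos
      rw [mul_inv_cancel₀ hlpos.ne'] at this
      linarith [hlM J]
    rw [hl0]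
    exact le_liminf_of_le hbdd.isCoboundedUnder_ge (Eventually.of_forall h.b_nonneg)

end IsBoundedRenewal

theorem pow_sub_pow_eq_sum_pow_mul_sub_mul_pow {R : Type*} [Ring R] (x y : R) (n : ℕ) :
    x ^ n - y ^ n = ∑ k ∈ range n, x ^ k * (x - y) * y ^ (n - 1 - k) := by
  have := sum_range_sub (fun k => x ^ k * y ^ (n - k)) n
  simp only [Nat.sub_self, pow_zero, mul_one, one_mul, Nat.sub_zero] at this
  rw [← this]
  refine sum_congr rfl fun k hk => ?_
  obtain ⟨m, rfl⟩ := Nat.exists_eq_add_of_lt (mem_range.1 hk)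
  rw [show k + m + 1 - (k + 1) = m by omega, show k + m + 1 - k = m + 1 by omega,
    show k + m + 1 - 1 - k = m by omega, pow_succ, pow_succ']
  noncomm_ring

theorem pow_sub_pow_eq_sum_pow_mul_sub_mul_pow' {R : Type*} [Ring R] (x y : R) (n : ℕ) :
    x ^ n - y ^ n = ∑ k ∈ range n, y ^ k * (x - y) * x ^ (n - 1 - k) := by
  rw [← neg_sub, pow_sub_pow_eq_sum_pow_mul_sub_mul_pow y x, ← sum_neg_distrib]
  simp only [← neg_sub x y, mul_neg, neg_mul, neg_neg]

namespace Matrix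

theorem mul_single_one_mul_apply {l m n R : Type*} [Fintype m] [DecidableEq m] [Semiring R]
    (X : Matrix l m R) (Y : Matrix m n R) (i : m) (j : l) (k : n) :
    (X * single i i (1 : R) * Y) j k = X j i * Y i k := by
  rw [mul_apply, sum_eq_single i
    (fun p _ hp => by rw [mul_single_apply_of_ne (1 : R) i i j p hp, zero_mul]) (by simp),
    mul_single_apply_same, mul_one]

section FirstReturn

variable {ι R : Type*} [Fintype ι] [DecidableEq ι] [Ring R] (A : Matrix ι ι R) (i : ι)

theorem sub_updateCol_zero_eq_mul_single : A - A.updateCol i 0 = A * single i i (1 : R) := by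
  ext j l
  rcases eq_or_ne l i with rfl | hl
  · simp
  · simp [hl, mul_single_apply_of_ne (1 : R) i i j l hl]

theorem pow_succ_updateCol_zero_apply (n : ℕ) (j : ι) : (A.updateCol i 0 ^ (n + 1)) j i = 0 := by
  rw [pow_succ, mul_apply]
  exact sum_eq_zero fun l _ => by rw [updateCol_self, Pi.zero_apply, mul_zero]

-- `(A.updateCol i 0 ^ k * A) i i` sums over the paths from `i` that first return to `i` at
-- step `k + 1`.
theorem pow_succ_apply_self_eq_sum_updateCol (n : ℕ) :
    (A ^ (n + 1)) i i
      = ∑ k ∈ range (n + 1), (A.updateCol i 0 ^ k * A) i i * (A ^ (n - k)) i i := by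
  have h := pow_sub_pow_eq_sum_pow_mul_sub_mul_pow' A (A.updateCol i 0) (n + 1)
  rw [sub_updateCol_zero_eq_mul_single, sub_eq_iff_eq_add'] at h
  rw [h, add_apply, pow_succ_updateCol_zero_apply, zero_add, sum_apply]
  refine sum_congr rfl fun k _ => ?_
  rw [← mul_assoc, mul_single_one_mul_apply, Nat.add_sub_cancel]

theorem pow_apply_eq_sum_updateCol (n : ℕ) (j : ι) :
    (A ^ n) i j = ∑ m ∈ range (n + 1), (A ^ (n - m)) i i * (A.updateCol i 0 ^ m) i j := by
  have h := pow_sub_pow_eq_sum_pow_mul_sub_mul_pow A (A.updateCol i 0) n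
  rw [sub_updateCol_zero_eq_mul_single, sub_eq_iff_eq_add'] at h
  rw [sum_range_succ, Nat.sub_self, pow_zero, one_apply_eq, one_mul, ← sum_range_reflect, h,
    add_apply, sum_apply, add_comm]
  congr 1
  refine sum_congr rfl fun k hk => ?_
  rw [← mul_assoc, mul_single_one_mul_apply, ← pow_succ,
    show n - (n - 1 - k) = k + 1 by have := mem_range.1 hk; omega]

end FirstReturn

variable {ι : Type*} [Fintype ι] [DecidableEq ι]

theorem exists_tendsto_pow_apply_row (A : Matrix ι ι ℝ) (i : ι) (hA : ∀ j l, 0 ≤ A j l)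
    (hii : 0 < A i i) (hdiag : ∀ n, (A ^ n) i i ≤ 1) (hrow : ∀ n j, (A ^ n) i j ≤ (A ^ n) i i) :
    ∃ L, Tendsto (fun n => (A ^ n) i) atTop (𝓝 L) := by
  have hT (j l : ι) : 0 ≤ A.updateCol i 0 j l := by
    rw [updateCol_apply]; split_ifs; exacts [le_rfl, hA j l]
  have hren : IsBoundedRenewal (fun k => (A.updateCol i 0 ^ k * A) i i) (fun n => (A ^ n) i i) :=
    { f_nonneg := fun k => sum_nonneg fun l _ => mul_nonneg (pow_apply_nonneg hT k i l) (hA l i)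
      b_zero := by simp
      b_nonneg := fun n => pow_apply_nonneg hA n i i
      b_le_one := hdiag
      b_succ := pow_succ_apply_self_eq_sum_updateCol A i }
  obtain ⟨β, hβ⟩ := hren.exists_tendsto (by simpa using hii)
  have hcol (j : ι) : ∃ L, Tendsto (fun n => (A ^ n) i j) atTop (𝓝 L) := by
    simp_rw [pow_apply_eq_sum_updateCol A i _ j]
    exact exists_tendsto_sum_range_mul_of_le hβ hren.b_nonneg hdiag
      (fun m => pow_apply_nonneg hT m i j) fun n => pow_apply_eq_sum_updateCol A i n j ▸ hrow n j
  choose L hL using hcol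
  exact ⟨L, tendsto_pi_nhds.2 hL⟩

theorem apply_self_pow_le_pow_apply_self {B : Matrix ι ι ℝ} (hB : ∀ j l, 0 ≤ B j l) (i : ι)
    (k : ℕ) : B i i ^ k ≤ (B ^ k) i i := by
  induction k with
  | zero => simp
  | succ k ih =>
    rw [pow_succ, pow_succ, mul_apply]
    exact (mul_le_mul_of_nonneg_right ih (hB i i)).trans (single_le_sum
      (f := fun l => (B ^ k) i l * B l i)
      (fun l _ => mul_nonneg (pow_apply_nonneg hB k i l) (hB l i))
      (mem_univ i))

end Matrix

theorem ofReal_le_spectralRadius_of_pow_le_norm {A : Type*} [NormedRing A] [NormedAlgebra ℂ A]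
    [CompleteSpace A] (a : A) {r : ℝ} (hr : 0 ≤ r) (h : ∀ k : ℕ, r ^ k ≤ ‖a ^ k‖) :
    ENNReal.ofReal r ≤ spectralRadius ℂ a := by
  refine ge_of_tendsto (spectrum.pow_norm_pow_one_div_tendsto_nhds_spectralRadius a) ?_
  filter_upwards [eventually_ge_atTop 1] with k hk
  refine ENNReal.ofReal_le_ofReal ?_
  calc r = (r ^ k) ^ (k⁻¹ : ℝ) := (Real.pow_rpow_inv_natCast hr (by omega)).symm
    _ ≤ ‖a ^ k‖ ^ (1 / k : ℝ) := by
        rw [one_div]; exact Real.rpow_le_rpow (pow_nonneg hr k) (h k) (by positivity)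

section LinftyOp

attribute [local instance] Matrix.linftyOpSeminormedAddCommGroup Matrix.linftyOpNormedRing
  Matrix.linftyOpNormedAlgebra

theorem Matrix.norm_apply_le_linfty_opNorm {m n α : Type*} [Fintype m] [Fintype n]
    [SeminormedAddCommGroup α] (M : Matrix m n α) (i : m) (j : n) : ‖M i j‖ ≤ ‖M‖ := by
  have : ‖M i j‖₊ ≤ ‖M‖₊ := by
    rw [linfty_opNNNorm_def]
    exact (single_le_sum (fun _ _ => zero_le) (mem_univ j)).trans
      (le_sup (f := fun i => ∑ j, ‖M i j‖₊) (mem_univ i))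
  exact_mod_cast this

theorem Matrix.ofReal_pow_apply_self_le_spectralRadius {ι : Type*} [Fintype ι] [DecidableEq ι]
    {A : Matrix ι ι ℝ} (hA : ∀ j l, 0 ≤ A j l) (i : ι) (n : ℕ) :
    ENNReal.ofReal ((A ^ n) i i) ≤ spectralRadius ℂ (A.map Complex.ofReal ^ n) := by
  refine ofReal_le_spectralRadius_of_pow_le_norm _ (pow_apply_nonneg hA n i i) fun k => ?_
  calc ((A ^ n) i i) ^ k ≤ ((A ^ n) ^ k) i i :=
        apply_self_pow_le_pow_apply_self (pow_apply_nonneg hA n) i k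
    _ = ‖(((A ^ n) ^ k).map Complex.ofReal) i i‖ := by
        simp [abs_of_nonneg (pow_apply_nonneg (pow_apply_nonneg hA n) k i i)]
    _ ≤ ‖((A ^ n) ^ k).map Complex.ofReal‖ := norm_apply_le_linfty_opNorm _ i i
    _ = ‖(A.map Complex.ofReal ^ n) ^ k‖ := by
        rw [← pow_mul, ← pow_mul]; exact congrArg norm (Matrix.map_pow A Complex.ofRealHom _)

theorem spectralRadius_pow_le_ofReal_specRad_pow {N : ℕ} (A : Matrix (Fin N) (Fin N) ℝ) {n : ℕ}
    (hn : 0 < n) :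
    spectralRadius ℂ (A.map Complex.ofReal ^ n) ≤ ENNReal.ofReal (specRad A ^ n) := by
  rw [spectralRadius, spectrum.map_pow_of_pos _ hn]
  refine iSup₂_le fun z hz => ?_
  obtain ⟨μ, hμ, rfl⟩ := hz
  have hle : ‖μ‖ ≤ specRad A :=
    le_csSup ((spectrum.isCompact _).image continuous_norm).bddAbove (Set.mem_image_of_mem _ hμ)
  rw [← ENNReal.ofReal_coe_nnreal, coe_nnnorm, norm_pow]
  exact ENNReal.ofReal_le_ofReal (pow_le_pow_left₀ (norm_nonneg μ) hle n)

end LinftyOp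

theorem pow_apply_self_le_specRad_pow {N : ℕ} {A : Matrix (Fin N) (Fin N) ℝ} (hA : ∀ j l, 0 ≤ A j l)
    (i : Fin N) (n : ℕ) : (A ^ n) i i ≤ specRad A ^ n := by
  rcases n.eq_zero_or_pos with rfl | hn
  · simp
  have hρ : 0 ≤ specRad A := Real.sSup_nonneg (by rintro _ ⟨z, -, rfl⟩; exact norm_nonneg z)
  exact (ENNReal.ofReal_le_ofReal_iff (pow_nonneg hρ n)).1
    ((Matrix.ofReal_pow_apply_self_le_spectralRadius hA i n).trans
      (spectralRadius_pow_le_ofReal_specRad_pow A hn))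

theorem stmt_14_general (N : ℕ) [NeZero N] (A : Matrix (Fin N) (Fin N) ℝ)
    (hA : ∀ i j, 0 ≤ A i j) (hρ : 0 < specRad A)
    (h1 : 0 < A 0 0)
    (h3 : ∀ (n : ℕ) (i : Fin N),
      Matrix.vecMul (Pi.single 0 1) (A ^ n) i ≤ Matrix.vecMul (Pi.single 0 1) (A ^ n) 0) :
    ∃ L : Fin N → ℝ, Filter.Tendsto
      (fun n : ℕ => (specRad A ^ n)⁻¹ • Matrix.vecMul (Pi.single 0 1) (A ^ n))
      Filter.atTop (nhds L) := by
  set B := (specRad A)⁻¹ • A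
  have hB (n : ℕ) : (specRad A ^ n)⁻¹ • Matrix.vecMul (Pi.single 0 1) (A ^ n) = (B ^ n) 0 := by
    rw [Matrix.single_one_vecMul, smul_pow, inv_pow]; rfl
  simp_rw [hB]
  refine Matrix.exists_tendsto_pow_apply_row B 0 (fun i j => ?_) ?_ (fun n => ?_) (fun n i => ?_)
  · exact mul_nonneg (inv_nonneg.2 hρ.le) (hA i j)
  · exact mul_pos (inv_pos.2 hρ) h1
  · rw [← hB, Pi.smul_apply, smul_eq_mul, Matrix.single_one_vecMul, Matrix.row_apply,
      inv_mul_le_one₀ (pow_pos hρ n)]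
    exact pow_apply_self_le_specRad_pow hA 0 n
  · rw [← hB, Pi.smul_apply, Pi.smul_apply]
    exact smul_le_smul_of_nonneg_left (h3 n i) (inv_nonneg.2 (pow_pos hρ n).le)

/-- A Perron–Frobenius type convergence result for a nonnegative matrix that
need not be irreducible: under conditions (i)–(iii) the normalised row
`e₁Aⁿ/ρ(A)ⁿ` converges. -/
theorem stmt_14 (N : ℕ) [NeZero N] (A : Matrix (Fin N) (Fin N) ℝ)
    (hA : ∀ i j, 0 ≤ A i j) (hρ : 0 < specRad A)
    (h1 : 0 < A 0 0)
    (h2 : ∃ n : ℕ, ∀ i, 0 < Matrix.vecMul (Pi.single 0 1) (A ^ n) i)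
    (h3 : ∀ (n : ℕ) (i : Fin N),
      Matrix.vecMul (Pi.single 0 1) (A ^ n) i ≤ Matrix.vecMul (Pi.single 0 1) (A ^ n) 0) :
    ∃ L : Fin N → ℝ, Filter.Tendsto
      (fun n : ℕ => (specRad A ^ n)⁻¹ • Matrix.vecMul (Pi.single 0 1) (A ^ n))
      Filter.atTop (nhds L) :=
  stmt_14_general N A hA hρ h1 h3
end

section
/- Let $A$ be a $k \times k$ nonnegative matrix such that every entry $A_{i,j}$ is either strictly positive, or lies in a row of $A$ that is identically zero, or lies in a column of $A$ that is identically zero; assume also $A_{1,1} > 0$. Then there exists a constant $K > 0$ such that for any two nonnegative row vectors $U, V$ with $U_1 > 0$ and $V_1 > 0$, the projectivized images satisfy $d((UA)', (VA)') < K$, where $U' = (U_2/U_1, \dots, U_k/U_1)$ and $d(X,Y) = \max_i |\ln X_i - \ln Y_i|$ (with $\ln 0 - \ln 0 := 0$). -/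
/-- Uniform projective contraction: a nonnegative matrix which is strictly
positive outside a set of zero rows and zero columns, with positive top-left
entry, maps all pairs of nonnegative directions (with positive first
coordinate) to pairs at uniformly bounded projective distance.  Here the
projectivization is `U' i = U i / U 0` and the distance is
`max_i |ln Xᵢ - ln Yᵢ|` (with `ln 0 - ln 0 := 0`, as with `Real.log 0 = 0`). -/
theorem stmt_16 (k : ℕ) [NeZero k] (A : Matrix (Fin k) (Fin k) ℝ)
    (hA : ∀ i j, 0 ≤ A i j) (h11 : 0 < A 0 0)
    (hpat : ∀ i j, 0 < A i j ∨ (∀ j', A i j' = 0) ∨ (∀ i', A i' j = 0)) :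
    ∃ K > 0, ∀ U V : Fin k → ℝ, (∀ i, 0 ≤ U i) → (∀ i, 0 ≤ V i) →
      0 < U 0 → 0 < V 0 → ∀ i : Fin k,
        |Real.log (Matrix.vecMul U A i / Matrix.vecMul U A 0) -
          Real.log (Matrix.vecMul V A i / Matrix.vecMul V A 0)| < K := by
  classical
  set S : Finset (Fin k × Fin k) := Finset.univ.filter (fun p => 0 < A p.1 p.2) with hSdef
  have hSne : S.Nonempty := ⟨(0, 0), by simp [hSdef, h11]⟩
  set m := S.inf' hSne (fun p => A p.1 p.2) with hmdef
  set M := S.sup' hSne (fun p => A p.1 p.2) with hMdef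
  have hm : 0 < m := by
    rw [hmdef, Finset.lt_inf'_iff]
    intro p hp
    simpa [hSdef] using (Finset.mem_filter.1 hp).2
  have hbounds : ∀ i j, 0 < A i j → m ≤ A i j ∧ A i j ≤ M := by
    intro i j h
    have hmem : (i, j) ∈ S := by simp [hSdef, h]
    exact ⟨Finset.inf'_le _ hmem, Finset.le_sup' (fun p => A p.1 p.2) hmem⟩
  have hmM : m ≤ M := ((hbounds 0 0 h11).1).trans (hbounds 0 0 h11).2
  have hMm1 : 1 ≤ M / m := (one_le_div hm).2 hmM
  set L := Real.log (M / m) with hLdef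
  have hL : 0 ≤ L := Real.log_nonneg hMm1
  have hrow0 : ¬ (∀ j', A 0 j' = 0) := fun h => by
    have := h 0; linarith
  -- key bound for one vector
  have key : ∀ W : Fin k → ℝ, (∀ i, 0 ≤ W i) → 0 < W 0 → ∀ j : Fin k,
      (¬ ∀ i', A i' j = 0) → |Real.log (Matrix.vecMul W A j / Matrix.vecMul W A 0)| ≤ L := by
    intro W hW hW0 j hj
    set w : Fin k → ℝ := fun i => if (∀ j', A i j' = 0) then 0 else W i with hwdef
    have hwn : ∀ i, 0 ≤ w i := by
      intro i; by_cases h : ∀ j', A i j' = 0 <;> simp [hwdef, h, hW i]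
    set T : ℝ := ∑ i, w i with hTdef
    have hT : 0 < T := by
      have h0 : w 0 = W 0 := by simp [hwdef, hrow0]
      calc (0:ℝ) < W 0 := hW0
        _ = w 0 := h0.symm
        _ ≤ T := Finset.single_le_sum (f := w) (fun i _ => hwn i) (Finset.mem_univ 0)
    have hterm : ∀ (j' : Fin k), (¬ ∀ i', A i' j' = 0) → ∀ i,
        m * w i ≤ W i * A i j' ∧ W i * A i j' ≤ M * w i := by
      intro j' hj' i
      by_cases hr : ∀ j'', A i j'' = 0
      · simp [hwdef, hr, hr j']
      · have hpos : 0 < A i j' := by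
          rcases hpat i j' with h | h | h
          · exact h
          · exact absurd h hr
          · exact absurd h hj'
        obtain ⟨h1, h2⟩ := hbounds i j' hpos
        have : w i = W i := by simp [hwdef, hr]
        rw [this]
        constructor
        · calc m * W i ≤ A i j' * W i := mul_le_mul_of_nonneg_right h1 (hW i)
            _ = W i * A i j' := mul_comm _ _
        · calc W i * A i j' = A i j' * W i := mul_comm _ _
            _ ≤ M * W i := mul_le_mul_of_nonneg_right h2 (hW i)
    have hsum : ∀ (j' : Fin k), (¬ ∀ i', A i' j' = 0) →
        m * T ≤ Matrix.vecMul W A j' ∧ Matrix.vecMul W A j' ≤ M * T := by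
      intro j' hj'
      have hv : Matrix.vecMul W A j' = ∑ i, W i * A i j' := by
        simp [Matrix.vecMul, dotProduct]
      rw [hv, hTdef, Finset.mul_sum, Finset.mul_sum]
      exact ⟨Finset.sum_le_sum fun i _ => (hterm j' hj' i).1,
        Finset.sum_le_sum fun i _ => (hterm j' hj' i).2⟩
    have hcol0 : ¬ ∀ i', A i' 0 = 0 := fun h => by have := h 0; linarith
    obtain ⟨hj1, hj2⟩ := hsum j hj
    obtain ⟨h01, h02⟩ := hsum 0 hcol0
    have hmT : 0 < m * T := mul_pos hm hT
    have hXj : 0 < Matrix.vecMul W A j := lt_of_lt_of_le hmT hj1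
    have hX0 : 0 < Matrix.vecMul W A 0 := lt_of_lt_of_le hmT h01
    rw [abs_le]
    constructor
    · have hratio : m / M ≤ Matrix.vecMul W A j / Matrix.vecMul W A 0 := by
        rw [div_le_div_iff₀ (lt_of_lt_of_le hm hmM) hX0]
        calc m * Matrix.vecMul W A 0 ≤ m * (M * T) :=
              mul_le_mul_of_nonneg_left h02 hm.le
          _ = M * (m * T) := by ring
          _ ≤ M * Matrix.vecMul W A j :=
              mul_le_mul_of_nonneg_left hj1 (lt_of_lt_of_le hm hmM).le
          _ = Matrix.vecMul W A j * M := mul_comm _ _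
      calc -L = Real.log (m / M) := by
            rw [hLdef, ← Real.log_inv]; congr 1
            field_simp
        _ ≤ _ := Real.log_le_log (div_pos hm (lt_of_lt_of_le hm hmM)) hratio
    · have hratio : Matrix.vecMul W A j / Matrix.vecMul W A 0 ≤ M / m := by
        rw [div_le_div_iff₀ hX0 hm]
        calc Matrix.vecMul W A j * m ≤ M * T * m := mul_le_mul_of_nonneg_right hj2 hm.le
          _ = M * (m * T) := by ring
          _ ≤ M * Matrix.vecMul W A 0 :=
              mul_le_mul_of_nonneg_left h01 (lt_of_lt_of_le hm hmM).le
      exact Real.log_le_log (div_pos hXj hX0) hratio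
  refine ⟨2 * L + 1, by linarith, ?_⟩
  intro U V hU hV hU0 hV0 i
  by_cases hc : ∀ i', A i' i = 0
  · have hz : ∀ W : Fin k → ℝ, Matrix.vecMul W A i = 0 := by
      intro W
      simp [Matrix.vecMul, dotProduct, hc]
    rw [hz U, hz V]
    simp
    linarith
  · have h1 := key U hU hU0 i hc
    have h2 := key V hV hV0 i hc
    calc |Real.log (Matrix.vecMul U A i / Matrix.vecMul U A 0) -
          Real.log (Matrix.vecMul V A i / Matrix.vecMul V A 0)| ≤
        |Real.log (Matrix.vecMul U A i / Matrix.vecMul U A 0)| +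
        |Real.log (Matrix.vecMul V A i / Matrix.vecMul V A 0)| := abs_sub _ _
      _ ≤ L + L := add_le_add h1 h2
      _ < 2 * L + 1 := by linarith
end

section
/- Let $\phi$ be the golden ratio. Suppose $a_1,\dots,a_m \in \{-1,0,1\}$ satisfy $a_1\phi^{m-1} + a_2\phi^{m-2} + \cdots + a_m = 0$ with $a_1 \neq 0$, and let $\Delta \subseteq \mathbb{Z}[\phi]$ be any set containing all partial sums $a_1\phi^{k-1}+\cdots+a_k$ for $1 \leq k \leq m-1$ and closed under negation. Then every power $\phi^j$ ($0 \leq j \leq m-1$) lies in the additive semigroup generated by $\Delta$ together with $-\Delta$. -/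
/-- From a vanishing `{-1,0,1}`-polynomial relation for `φ` with nonzero leading
coefficient, every power `φ^j`, `j < m`, lies in the additive monoid generated
by the set `Δ` of partial sums (assumed closed under negation). -/
theorem stmt_17 (m : ℕ) (hm : 1 ≤ m) (a : ℕ → ℤ)
    (ha : ∀ i, a i ∈ ({-1, 0, 1} : Set ℤ)) (ha1 : a 1 ≠ 0)
    (hrel : ∑ i ∈ Finset.Icc 1 m, (a i : ℝ) * phi ^ (m - i) = 0)
    (Δ : Set ℝ)
    (hpart : ∀ k, 1 ≤ k → k ≤ m - 1 →
      (∑ i ∈ Finset.Icc 1 k, (a i : ℝ) * phi ^ (k - i)) ∈ Δ)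
    (hneg : ∀ x ∈ Δ, -x ∈ Δ) :
    ∀ j < m, phi ^ j ∈ AddSubmonoid.closure Δ := by
  -- the closure is closed under negation
  have hnegc : ∀ x ∈ AddSubmonoid.closure Δ, -x ∈ AddSubmonoid.closure Δ := by
    intro x hx
    induction hx using AddSubmonoid.closure_induction with
    | mem y hy => exact AddSubmonoid.subset_closure (hneg y hy)
    | zero => simpa using (AddSubmonoid.closure Δ).zero_mem
    | add y z _ _ hy hz => rw [neg_add]; exact (AddSubmonoid.closure Δ).add_mem hy hz
  -- a 1 = 1 or a 1 = -1
  have ha1' : a 1 = 1 ∨ a 1 = -1 := by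
    rcases ha 1 with h | h | h
    · exact Or.inr h
    · exact absurd h ha1
    · exact Or.inl h
  intro j
  induction j using Nat.strong_induction_on with
  | _ j IH =>
  intro hjm
  -- partial sum S_{j+1} is in the closure
  have hS : (∑ i ∈ Finset.Icc 1 (j+1), (a i : ℝ) * phi ^ (j+1 - i))
      ∈ AddSubmonoid.closure Δ := by
    by_cases h : j + 1 ≤ m - 1
    · exact AddSubmonoid.subset_closure (hpart (j+1) (Nat.le_add_left 1 j) h)
    · have hjm1 : j + 1 = m := by omega
      rw [hjm1, hrel]
      exact (AddSubmonoid.closure Δ).zero_mem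
  -- split off the first term
  have herase : (Finset.Icc 1 (j+1)).erase 1 = Finset.Icc 2 (j+1) := by
    ext i
    simp only [Finset.mem_erase, Finset.mem_Icc]
    omega
  have hsplit : (∑ i ∈ Finset.Icc 1 (j+1), (a i : ℝ) * phi ^ (j+1 - i))
      = (a 1 : ℝ) * phi ^ j + ∑ i ∈ Finset.Icc 2 (j+1), (a i : ℝ) * phi ^ (j+1 - i) := by
    have h1 : (1 : ℕ) ∈ Finset.Icc 1 (j+1) := by simp
    rw [← Finset.add_sum_erase _ _ h1, herase]
    norm_num
  -- pull the sign out of the second sum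
  have hpull : ∑ i ∈ Finset.Icc 2 (j+1), (-(a 1 * a i : ℤ) : ℝ) * phi ^ (j+1 - i)
      = (-(a 1 : ℝ)) * ∑ i ∈ Finset.Icc 2 (j+1), (a i : ℝ) * phi ^ (j+1 - i) := by
    rw [Finset.mul_sum]
    apply Finset.sum_congr rfl
    intro i _
    push_cast
    ring
  -- key identity
  have hkey : phi ^ j = (a 1 : ℝ) * (∑ i ∈ Finset.Icc 1 (j+1), (a i : ℝ) * phi ^ (j+1 - i))
      + ∑ i ∈ Finset.Icc 2 (j+1), (-(a 1 * a i : ℤ) : ℝ) * phi ^ (j+1 - i) := by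
    rw [hsplit, hpull]
    rcases ha1' with h | h <;> rw [h] <;> push_cast <;> ring
  rw [hkey]
  apply (AddSubmonoid.closure Δ).add_mem
  · rcases ha1' with h | h
    · rw [h]; simpa using hS
    · rw [h]; push_cast; rw [neg_one_mul]; exact hnegc _ hS
  · apply AddSubmonoid.sum_mem
    intro i hi
    simp only [Finset.mem_Icc] at hi
    have hlt : j + 1 - i < j := by omega
    have hpow : phi ^ (j+1-i) ∈ AddSubmonoid.closure Δ := IH _ hlt (by omega)
    have hc : a 1 * a i = -1 ∨ a 1 * a i = 0 ∨ a 1 * a i = 1 := by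
      rcases ha1' with h1 | h1 <;> rcases ha i with h | h | h <;>
        (try simp only [Set.mem_singleton_iff] at h) <;> simp [h1, h]
    rcases hc with h | h | h <;> rw [h]
    · norm_num
      exact hpow
    · simpa using (AddSubmonoid.closure Δ).zero_mem
    · push_cast
      rw [neg_one_mul]
      exact hnegc _ hpow
end
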